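/- arXiv:2303.00432 — 2 statements merged into one kernel-verified Lean document; each statement's English description precedes it below -/
import Mathlib

section
/- Every equivalence class under the vector equivalence ↔ contains a unique irreducible element x₁, and every element of the class has the form x₁ ⊗ 1_s for some s ≥ 1. -/
open Matrix

noncomputable section

/-- All-ones vector in `ℝ^k`. -/
def ones (k : ℕ) : Fin k → ℝ := fun _ => 1

/-- Kronecker product of two vectors (column vectors). -/
def vkron {m k : ℕ} (x : Fin m → ℝ) (y : Fin k → ℝ) : Fin (m * k) → ℝ :=
  fun i => x (finProdFinEquiv.symm i).1 * y (finProdFinEquiv.symm i).2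

/-- `J_k`: the `k × k` matrix all of whose entries are `1/k`. -/
def Jmat (k : ℕ) : Matrix (Fin k) (Fin k) ℝ := Matrix.of fun _ _ => (k : ℝ)⁻¹

/-- Kronecker product of matrices. -/
def mkron {m n p q : ℕ} (A : Matrix (Fin m) (Fin n) ℝ) (B : Matrix (Fin p) (Fin q) ℝ) :
    Matrix (Fin (m * p)) (Fin (n * q)) ℝ :=
  Matrix.of fun i j =>
    A (finProdFinEquiv.symm i).1 (finProdFinEquiv.symm j).1 *
    B (finProdFinEquiv.symm i).2 (finProdFinEquiv.symm j).2

/-- Mixed-dimensional vectors. -/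
def MVec := Σ n : ℕ, Fin n → ℝ

/-- Vector equivalence: `x ↔ y` iff `x ⊗ 1_α = y ⊗ 1_β` for some `α, β ≥ 1`. -/
def vequiv (x y : MVec) : Prop :=
  ∃ α β : ℕ, 0 < α ∧ 0 < β ∧ ∃ h : x.1 * α = y.1 * β,
    ∀ i, vkron x.2 (ones α) i = vkron y.2 (ones β) (Fin.cast h i)


/-- A mixed-dimensional vector is irreducible if it is not of the form
`y ⊗ 1_s` with `s > 1`. -/
def IrreducibleVec (x : MVec) : Prop :=
  ¬ ∃ (k s : ℕ) (y : Fin k → ℝ), 1 < s ∧ x = ⟨k * s, vkron y (ones s)⟩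

/-!
Call `s` a block size of `x` if `x = p ⊗ 1_s`, i.e. `x` is constant on consecutive blocks of
length `s`. If `s` and `t` are block sizes, `x` cannot change between positions `m` and `m + 1`
unless both `s` and `t`, hence `lcm s t`, divide `m + 1`; so `lcm s t` is again a block size.
Consequently a vector of positive length has a largest block size `M`, divisible by all the others,
and the `p` with `x = p ⊗ 1_M` is irreducible. If `y ⊗ 1_α = p ⊗ 1_(Mβ)`, the largest block size
of this common vector is divisible by `α` and by `Mβ`, and irreducibility of `p` forces it to be
`Mβ`; hence `y = p ⊗ 1_c` with `c = Mβ / α`.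
-/

theorem apply_eq_of_div_eq_of_succ {α : Type*} {n L : ℕ} {f : Fin n → α}
    (hstep : ∀ (m : ℕ) (hm : m + 1 < n), ¬ L ∣ m + 1 → f ⟨m, by omega⟩ = f ⟨m + 1, hm⟩)
    {i j : Fin n} (hij : (i : ℕ) / L = j / L) : f i = f j := by
  wlog hle : (i : ℕ) ≤ j generalizing i j
  · exact (this hij.symm (by omega)).symm
  obtain ⟨i, hi⟩ := i
  obtain ⟨j, hj⟩ := j
  dsimp only at hij hle
  induction j, hle using Nat.le_induction with
  | base => rfl
  | succ k hik ih =>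
    have hk : i / L = k / L :=
      le_antisymm (Nat.div_le_div_right hik) (hij ▸ Nat.div_le_div_right (by omega))
    have hnd : ¬ L ∣ k + 1 := fun hd => by rw [Nat.succ_div_of_dvd hd] at hij; omega
    exact (ih (by omega) hk).trans (hstep k hj hnd)

theorem apply_eq_of_div_lcm_eq {α : Type*} {n s t : ℕ} {f : Fin n → α}
    (hs : ∀ i j : Fin n, (i : ℕ) / s = j / s → f i = f j)
    (ht : ∀ i j : Fin n, (i : ℕ) / t = j / t → f i = f j)
    {i j : Fin n} (hij : (i : ℕ) / Nat.lcm s t = j / Nat.lcm s t) : f i = f j := by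
  refine apply_eq_of_div_eq_of_succ (fun m hm hnd => ?_) hij
  by_cases hsd : s ∣ m + 1
  · exact ht _ _ (Nat.succ_div_of_not_dvd fun htd => hnd (Nat.lcm_dvd hsd htd)).symm
  · exact hs _ _ (Nat.succ_div_of_not_dvd hsd).symm

theorem vkron_ones_apply {k s : ℕ} (y : Fin k → ℝ) (i : Fin (k * s)) :
    vkron y (ones s) i = y i.divNat := by
  simp [vkron, ones]

namespace MVec

theorem mk_eq_mk_iff {n m : ℕ} {v : Fin n → ℝ} {w : Fin m → ℝ} :
    (⟨n, v⟩ : MVec) = ⟨m, w⟩ ↔ ∃ h : n = m, ∀ i, v i = w (Fin.cast h i) := by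
  constructor
  · rintro ⟨⟩
    exact ⟨rfl, fun _ => rfl⟩
  · rintro ⟨rfl, h⟩
    exact congrArg _ (funext h)

def kronOnes (p : MVec) (s : ℕ) : MVec := ⟨p.1 * s, vkron p.2 (ones s)⟩

theorem kronOnes_one (p : MVec) : p.kronOnes 1 = p :=
  mk_eq_mk_iff.mpr ⟨p.1.mul_one, fun i => by
    rw [vkron_ones_apply]; exact congrArg p.2 (Fin.ext (by simp [Fin.coe_divNat]))⟩

theorem kronOnes_kronOnes (p : MVec) (s t : ℕ) :
    (p.kronOnes s).kronOnes t = p.kronOnes (s * t) := by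
  obtain ⟨n, v⟩ := p
  change (⟨n * s * t, vkron (vkron v (ones s)) (ones t)⟩ : MVec) =
    ⟨n * (s * t), vkron v (ones (s * t))⟩
  refine mk_eq_mk_iff.mpr ⟨Nat.mul_assoc .., fun i => ?_⟩
  rw [vkron_ones_apply, vkron_ones_apply, vkron_ones_apply]
  exact congrArg v (Fin.ext (by simp [Fin.coe_divNat, Nat.div_div_eq_div_mul, Nat.mul_comm t s]))

theorem kronOnes_left_injective {s : ℕ} (hs : 0 < s) :
    Function.Injective fun p : MVec => p.kronOnes s := by
  rintro ⟨a, u⟩ ⟨b, w⟩ h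
  obtain ⟨hab, he⟩ := mk_eq_mk_iff.mp h
  obtain rfl := Nat.eq_of_mul_eq_mul_right hs hab
  refine mk_eq_mk_iff.mpr ⟨rfl, fun j => ?_⟩
  have := he ⟨j * s, (Nat.mul_lt_mul_right hs).mpr j.2⟩
  simp only [vkron_ones_apply] at this
  convert this using 2 <;> ext <;> simp [Fin.coe_divNat, Nat.mul_div_cancel _ hs]

theorem vequiv_iff {x y : MVec} :
    vequiv x y ↔ ∃ α β, 0 < α ∧ 0 < β ∧ x.kronOnes α = y.kronOnes β :=
  exists₂_congr fun _ _ => and_congr_right' <| and_congr_right' mk_eq_mk_iff.symm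

def HasBlockSize (s : ℕ) (x : MVec) : Prop := ∃ p : MVec, x = p.kronOnes s

theorem hasBlockSize_iff {s n : ℕ} {v : Fin n → ℝ} :
    HasBlockSize s ⟨n, v⟩ ↔ s ∣ n ∧ ∀ i j : Fin n, (i : ℕ) / s = j / s → v i = v j := by
  constructor
  · rintro ⟨⟨k, y⟩, h⟩
    obtain ⟨rfl, he⟩ := mk_eq_mk_iff.mp h
    refine ⟨dvd_mul_left s k, fun i j hij => ?_⟩
    simp only [he, vkron_ones_apply]
    congr 1; ext; simpa [Fin.coe_divNat] using hij
  · rintro ⟨hdvd, hv⟩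
    rcases Nat.eq_zero_or_pos s with rfl | hs
    · obtain rfl := zero_dvd_iff.mp hdvd
      exact ⟨⟨0, Fin.elim0⟩, mk_eq_mk_iff.mpr ⟨rfl, fun i => i.elim0⟩⟩
    refine ⟨⟨n / s, fun j => v ⟨j * s, (Nat.lt_div_iff_mul_lt_of_dvd hs.ne' hdvd).mp j.2⟩⟩,
      mk_eq_mk_iff.mpr ⟨(Nat.div_mul_cancel hdvd).symm, fun i => ?_⟩⟩
    rw [vkron_ones_apply]
    exact hv _ _ <| by simp [Fin.coe_divNat, Nat.mul_div_cancel _ hs]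

theorem HasBlockSize.lcm {s t : ℕ} {x : MVec} (hs : HasBlockSize s x) (ht : HasBlockSize t x) :
    HasBlockSize (Nat.lcm s t) x := by
  obtain ⟨n, v⟩ := x
  rw [hasBlockSize_iff] at *
  exact ⟨Nat.lcm_dvd hs.1 ht.1, fun i j => apply_eq_of_div_lcm_eq hs.2 ht.2⟩

theorem HasBlockSize.dvd_fst {s : ℕ} {x : MVec} : HasBlockSize s x → s ∣ x.1 := by
  rintro ⟨p, rfl⟩
  exact dvd_mul_left s p.1

theorem hasBlockSize_one (x : MVec) : HasBlockSize 1 x := ⟨x, (kronOnes_one x).symm⟩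

theorem exists_eq_kronOnes_forall_hasBlockSize_dvd {x : MVec} (hx : 0 < x.1) :
    ∃ (p : MVec) (M : ℕ), x = p.kronOnes M ∧ ∀ s, HasBlockSize s x → s ∣ M := by
  classical
  set M := Nat.findGreatest (HasBlockSize · x) x.1
  obtain ⟨p, hp⟩ : HasBlockSize M x :=
    Nat.findGreatest_spec (P := (HasBlockSize · x)) hx (hasBlockSize_one x)
  refine ⟨p, M, hp, fun s hs => ?_⟩
  have hL := hs.lcm ⟨p, hp⟩
  have hL_pos : 0 < Nat.lcm s M := Nat.pos_of_dvd_of_pos hL.dvd_fst hx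
  have hL_eq : Nat.lcm s M = M :=
    le_antisymm (Nat.le_findGreatest (Nat.le_of_dvd hx hL.dvd_fst) hL)
      (Nat.le_of_dvd hL_pos (Nat.dvd_lcm_right s M))
  exact hL_eq ▸ Nat.dvd_lcm_left s M

theorem irreducibleVec_iff {x : MVec} : IrreducibleVec x ↔ ∀ s, 1 < s → ¬ HasBlockSize s x := by
  constructor
  · rintro h s hs ⟨⟨k, y⟩, rfl⟩
    exact h ⟨k, s, y, hs, rfl⟩
  · rintro h ⟨k, s, y, hs, rfl⟩
    exact h s hs ⟨⟨k, y⟩, rfl⟩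

theorem irreducibleVec_of_forall_hasBlockSize_dvd {p : MVec} {M : ℕ} (hM : 0 < M)
    (hmax : ∀ s, HasBlockSize s (p.kronOnes M) → s ∣ M) : IrreducibleVec p := by
  refine irreducibleVec_iff.mpr fun t ht ⟨q, hq⟩ => ?_
  have := Nat.le_of_dvd hM (hmax (t * M) ⟨q, by rw [hq, kronOnes_kronOnes]⟩)
  nlinarith

end MVec

open MVec

theorem IrreducibleVec.fst_pos {p : MVec} (hp : IrreducibleVec p) : 0 < p.1 := by
  obtain ⟨n, v⟩ := p
  refine Nat.pos_of_ne_zero fun hn => irreducibleVec_iff.mp hp 2 one_lt_two ?_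
  subst hn
  exact hasBlockSize_iff.mpr ⟨dvd_zero 2, fun i => i.elim0⟩

theorem IrreducibleVec.eq_one_of_eq_kronOnes {p r : MVec} {c : ℕ} (hp : IrreducibleVec p)
    (h : p = r.kronOnes c) : c = 1 := by
  have hc : c ≠ 0 := by
    rintro rfl
    simpa [h, kronOnes] using hp.fst_pos
  by_contra hc1
  exact irreducibleVec_iff.mp hp c (by omega) ⟨r, h⟩

theorem IrreducibleVec.exists_eq_kronOnes_of_kronOnes_eq {p q : MVec} {a b : ℕ}
    (hp : IrreducibleVec p) (ha : 0 < a) (hb : 0 < b) (h : p.kronOnes a = q.kronOnes b) :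
    ∃ c, 0 < c ∧ q = p.kronOnes c := by
  obtain ⟨r, M, hr, hmax⟩ :=
    exists_eq_kronOnes_forall_hasBlockSize_dvd (x := p.kronOnes a) (Nat.mul_pos hp.fst_pos ha)
  obtain ⟨c', hc'⟩ := hmax a ⟨p, rfl⟩
  obtain ⟨c, hc⟩ := hmax b ⟨q, h⟩
  have hpr : p = r.kronOnes c' :=
    kronOnes_left_injective ha (by dsimp only; rw [hr, hc', kronOnes_kronOnes, Nat.mul_comm])
  obtain rfl := hp.eq_one_of_eq_kronOnes hpr
  rw [kronOnes_one] at hpr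
  subst hpr
  refine ⟨c, Nat.pos_of_ne_zero ?_, kronOnes_left_injective hb ?_⟩
  · rintro rfl
    omega
  · dsimp only
    rw [← h, hr, hc, kronOnes_kronOnes, Nat.mul_comm]

/-- every equivalence class (of a positive-dimensional vector)
contains a unique irreducible element `x₁`, and every member of the class is of
the form `x₁ ⊗ 1_s`. -/
theorem exists_unique_irreducible (x : MVec) (hx : 0 < x.1) :
    ∃! x₁ : MVec, IrreducibleVec x₁ ∧ vequiv x₁ x ∧
      ∀ y : MVec, vequiv y x → ∃ s : ℕ, 0 < s ∧ y = ⟨x₁.1 * s, vkron x₁.2 (ones s)⟩ := by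
  obtain ⟨p, M, rfl, hmax⟩ := exists_eq_kronOnes_forall_hasBlockSize_dvd hx
  have hM : 0 < M := Nat.pos_of_ne_zero fun hM => by simp [hM, kronOnes] at hx
  have hp := irreducibleVec_of_forall_hasBlockSize_dvd hM hmax
  have hclass : ∀ y, vequiv y (p.kronOnes M) → ∃ s, 0 < s ∧ y = p.kronOnes s := by
    intro y hy
    obtain ⟨α, β, hα, hβ, h⟩ := vequiv_iff.mp hy
    exact hp.exists_eq_kronOnes_of_kronOnes_eq (Nat.mul_pos hM hβ) hα
      (by rw [h, kronOnes_kronOnes])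
  refine ⟨p, ⟨hp, vequiv_iff.mpr ⟨M, 1, hM, one_pos, (kronOnes_one _).symm⟩, hclass⟩, ?_⟩
  rintro z ⟨hz, hzx, -⟩
  obtain ⟨s, -, rfl⟩ := hclass z hzx
  rw [hz.eq_one_of_eq_kronOnes rfl, kronOnes_one]
end
end

section
/- The second semi-tensor product is well-defined on matrix equivalence classes: if A ≈ A' and B ≈ B' (i.e., A ⊗ J_α = A' ⊗ J_{α'} and B ⊗ J_β = B' ⊗ J_{β'} for some indices), then A ∘ B ≈ A' ∘ B'. -/
/-!
Extend matrices by zero to `ℕ × ℕ`-indexed arrays. Then `A ⊗ J_u` is the array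
`(i, j) ↦ A (i / u) (j / u) / u`, and `A ≈ A'` says that `A ⊗ J_α` and `A' ⊗ J_α'` agree as
arrays. Inflating by `J_u` commutes with products (`(F ⊗ J_u)(G ⊗ J_u) = FG ⊗ J_u`, as
`J_u² = J_u`), so `(A ∘ B) ⊗ J_γ = (A ⊗ J_{γt/n})(B ⊗ J_{γt/p})` with `t = lcm(n, p)`.
Choose `γ, γ'` with `γ t = γ' t'`, `(γ t / n, γ' t' / n') = (α u, α' u)` and
`(γ t / p, γ' t' / p') = (β v, β' v)`; then `A ⊗ J_{γt/n} = A' ⊗ J_{γ't'/n'}`, likewise for `B`,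
and both sides are the same product.
-/

open Matrix

noncomputable section

/-- Mixed-dimensional matrices. -/
def MMat := Σ m n : ℕ, Matrix (Fin m) (Fin n) ℝ

/-- Matrix equivalence: `A ≈ B` iff `A ⊗ J_α = B ⊗ J_β` for some `α, β ≥ 1`. -/
def mequiv (A B : MMat) : Prop :=
  ∃ α β : ℕ, 0 < α ∧ 0 < β ∧
    ∃ (h1 : A.1 * α = B.1 * β) (h2 : A.2.1 * α = B.2.1 * β),
      ∀ i j, mkron A.2.2 (Jmat α) i j = mkron B.2.2 (Jmat β) (Fin.cast h1 i) (Fin.cast h2 j)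

/-- The second semi-tensor product `A ∘ B := (A ⊗ J_{t/n})(B ⊗ J_{t/p})`, `t = lcm(n, p)`. -/
def sstp {m n p q : ℕ} (A : Matrix (Fin m) (Fin n) ℝ) (B : Matrix (Fin p) (Fin q) ℝ) :
    Matrix (Fin (m * (Nat.lcm n p / n))) (Fin (q * (Nat.lcm n p / p))) ℝ :=
  if h : n * (Nat.lcm n p / n) = p * (Nat.lcm n p / p) then
    mkron A (Jmat (Nat.lcm n p / n)) *
      (mkron B (Jmat (Nat.lcm n p / p))).submatrix (Fin.cast h) id
  else 0

open Finset

/-- Indexing by `ℕ` avoids casts between `Fin` types of propositionally equal sizes. -/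
def zeroExtend {m n : ℕ} (A : Matrix (Fin m) (Fin n) ℝ) (i j : ℕ) : ℝ :=
  if h : i < m ∧ j < n then A ⟨i, h.1⟩ ⟨j, h.2⟩ else 0

/-- On zero-extended arrays, `inflate f u` is `f ⊗ J_u`. -/
def inflate (f : ℕ → ℕ → ℝ) (u : ℕ) (i j : ℕ) : ℝ :=
  f (i / u) (j / u) * (u : ℝ)⁻¹

def mulUpTo (f g : ℕ → ℕ → ℝ) (r : ℕ) (i j : ℕ) : ℝ :=
  ∑ k ∈ range r, f i k * g k j

theorem sum_range_mul_div (F : ℕ → ℝ) (r u : ℕ) :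
    ∑ k ∈ range (r * u), F (k / u) = u * ∑ a ∈ range r, F a := by
  rw [← Fin.sum_univ_eq_sum_range, ← Fin.sum_univ_eq_sum_range, mul_sum,
    ← finProdFinEquiv.sum_comp, Fintype.sum_prod_type]
  refine Fintype.sum_congr _ _ fun a => ?_
  have hdiv (b : Fin u) : (b + u * a : ℕ) / u = a := by
    rw [Nat.add_mul_div_left _ _ b.pos, Nat.div_eq_of_lt b.isLt, zero_add]
  simp [finProdFinEquiv, hdiv]

theorem inflate_inflate (f : ℕ → ℕ → ℝ) (d u : ℕ) :
    inflate (inflate f d) u = inflate f (d * u) := by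
  ext i j
  simp only [inflate, Nat.div_div_eq_div_mul, Nat.cast_mul, mul_inv, mul_comm u d]
  ring

theorem mulUpTo_inflate (f g : ℕ → ℕ → ℝ) (r u : ℕ) :
    mulUpTo (inflate f u) (inflate g u) (r * u) = inflate (mulUpTo f g r) u := by
  ext i j
  rcases eq_or_ne u 0 with rfl | hu
  · simp [mulUpTo, inflate]
  simp only [mulUpTo, inflate]
  calc _ = (∑ k ∈ range (r * u), f (i / u) (k / u) * g (k / u) (j / u)) *
        ((u : ℝ)⁻¹ * (u : ℝ)⁻¹) := by
        rw [sum_mul]; exact sum_congr rfl fun _ _ => by ring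
    _ = _ := by rw [sum_range_mul_div (fun a => f (i / u) a * g a (j / u))]; field_simp

section Kronecker

variable {m n : ℕ} (A : Matrix (Fin m) (Fin n) ℝ)

theorem mkron_Jmat_apply {k : ℕ} (i : Fin (m * k)) (j : Fin (n * k)) :
    mkron A (Jmat k) i j = inflate (zeroExtend A) k i j := by
  have hi : (i : ℕ) / k < m := by simpa only [Fin.coe_divNat] using i.divNat.isLt
  have hj : (j : ℕ) / k < n := by simpa only [Fin.coe_divNat] using j.divNat.isLt
  simp only [mkron, Jmat, Matrix.of_apply, finProdFinEquiv_symm_apply, inflate, zeroExtend,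
    dif_pos (And.intro hi hj)]
  rfl

theorem inflate_zeroExtend_of_not_lt_left {u : ℕ} (hu : 0 < u) {i : ℕ} (hi : ¬ i < m * u)
    (j : ℕ) :
    inflate (zeroExtend A) u i j = 0 := by
  rw [inflate, zeroExtend, dif_neg fun h => hi ((Nat.div_lt_iff_lt_mul hu).1 h.1), zero_mul]

theorem inflate_zeroExtend_of_not_lt_right {u : ℕ} (hu : 0 < u) (i : ℕ) {j : ℕ}
    (hj : ¬ j < n * u) :
    inflate (zeroExtend A) u i j = 0 := by
  rw [inflate, zeroExtend, dif_neg fun h => hj ((Nat.div_lt_iff_lt_mul hu).1 h.2), zero_mul]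

end Kronecker

theorem mequiv_iff {m n m' n' : ℕ} {A : Matrix (Fin m) (Fin n) ℝ}
    {A' : Matrix (Fin m') (Fin n') ℝ} :
    mequiv ⟨m, n, A⟩ ⟨m', n', A'⟩ ↔ ∃ α α' : ℕ, 0 < α ∧ 0 < α' ∧ m * α = m' * α' ∧
      n * α = n' * α' ∧ inflate (zeroExtend A) α = inflate (zeroExtend A') α' := by
  constructor
  · rintro ⟨α, α', hα, hα', hrows, hcols, hAA'⟩
    refine ⟨α, α', hα, hα', hrows, hcols, funext₂ fun i j => ?_⟩
    by_cases hi : i < m * α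
    · by_cases hj : j < n * α
      · have := hAA' ⟨i, hi⟩ ⟨j, hj⟩
        rwa [mkron_Jmat_apply, mkron_Jmat_apply] at this
      · rw [inflate_zeroExtend_of_not_lt_right A hα i hj,
          inflate_zeroExtend_of_not_lt_right A' hα' i (hcols ▸ hj)]
    · rw [inflate_zeroExtend_of_not_lt_left A hα hi j,
        inflate_zeroExtend_of_not_lt_left A' hα' (hrows ▸ hi) j]
  · rintro ⟨α, α', hα, hα', hrows, hcols, hAA'⟩
    exact ⟨α, α', hα, hα', hrows, hcols, fun i j => by
      rw [mkron_Jmat_apply, mkron_Jmat_apply, hAA']; rfl⟩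

theorem zeroExtend_sstp {m n p q : ℕ} (hn : 0 < n) (hp : 0 < p)
    (A : Matrix (Fin m) (Fin n) ℝ) (B : Matrix (Fin p) (Fin q) ℝ) :
    zeroExtend (sstp A B) = mulUpTo (inflate (zeroExtend A) (Nat.lcm n p / n))
      (inflate (zeroExtend B) (Nat.lcm n p / p)) (Nat.lcm n p) := by
  have hnt : n * (Nat.lcm n p / n) = Nat.lcm n p := Nat.mul_div_cancel' (Nat.dvd_lcm_left n p)
  have hpt : p * (Nat.lcm n p / p) = Nat.lcm n p := Nat.mul_div_cancel' (Nat.dvd_lcm_right n p)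
  have htn : 0 < Nat.lcm n p / n := Nat.pos_of_mul_pos_left (hnt ▸ Nat.lcm_pos hn hp)
  have htp : 0 < Nat.lcm n p / p := Nat.pos_of_mul_pos_left (hpt ▸ Nat.lcm_pos hn hp)
  ext i j
  by_cases hi : i < m * (Nat.lcm n p / n)
  · by_cases hj : j < q * (Nat.lcm n p / p)
    · rw [zeroExtend, dif_pos ⟨hi, hj⟩, sstp, dif_pos (hnt.trans hpt.symm), Matrix.mul_apply,
        mulUpTo]
      simp only [Matrix.submatrix_apply, mkron_Jmat_apply, Fin.val_cast, id]
      rw [Fin.sum_univ_eq_sum_range (fun k => inflate (zeroExtend A) _ i k *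
        inflate (zeroExtend B) _ k j), hnt]
    · rw [zeroExtend, dif_neg fun h => hj h.2, mulUpTo]
      exact (sum_eq_zero fun k _ => by
        rw [inflate_zeroExtend_of_not_lt_right B htp k hj, mul_zero]).symm
  · rw [zeroExtend, dif_neg fun h => hi h.1, mulUpTo]
    exact (sum_eq_zero fun k _ => by
      rw [inflate_zeroExtend_of_not_lt_left A htn hi k, zero_mul]).symm

theorem sstp_well_defined_general (m n p q m' n' p' q' : ℕ)
    (hn : 0 < n) (hp : 0 < p)
    (hn' : 0 < n') (hp' : 0 < p')
    (A : Matrix (Fin m) (Fin n) ℝ) (B : Matrix (Fin p) (Fin q) ℝ)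
    (A' : Matrix (Fin m') (Fin n') ℝ) (B' : Matrix (Fin p') (Fin q') ℝ)
    (hA : mequiv ⟨m, n, A⟩ ⟨m', n', A'⟩) (hB : mequiv ⟨p, q, B⟩ ⟨p', q', B'⟩) :
    mequiv ⟨m * (Nat.lcm n p / n), q * (Nat.lcm n p / p), sstp A B⟩
           ⟨m' * (Nat.lcm n' p' / n'), q' * (Nat.lcm n' p' / p'), sstp A' B'⟩ := by
  obtain ⟨α, α', hα, hα', hmα, hnα, hAA'⟩ := mequiv_iff.1 hA
  obtain ⟨β, β', hβ, hβ', hpβ, hqβ, hBB'⟩ := mequiv_iff.1 hB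
  set t := Nat.lcm n p
  set t' := Nat.lcm n' p'
  have htn : t / n * n = t := Nat.div_mul_cancel (Nat.dvd_lcm_left n p)
  have htp : t / p * p = t := Nat.div_mul_cancel (Nat.dvd_lcm_right n p)
  have htn' : t' / n' * n' = t' := Nat.div_mul_cancel (Nat.dvd_lcm_left n' p')
  have htp' : t' / p' * p' = t' := Nat.div_mul_cancel (Nat.dvd_lcm_right n' p')
  set γ := t' * (n * α) * (p * β)
  set γ' := t * (n * α) * (p * β)
  have hγA : t / n * γ = α * (t * t' * (p * β)) := by
    linear_combination (α * t' * (p * β)) * htn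
  have hγA' : t' / n' * γ' = α' * (t * t' * (p * β)) := by
    linear_combination (α' * t * (p * β)) * htn' + t' / n' * t * (p * β) * hnα
  have hγB : t / p * γ = β * (t * t' * (n * α)) := by
    linear_combination (β * t' * (n * α)) * htp
  have hγB' : t' / p' * γ' = β' * (t * t' * (n * α)) := by
    linear_combination (β' * t * (n * α)) * htp' + t' / p' * t * (n * α) * hpβ
  have hA_γ : inflate (zeroExtend A) (t / n * γ) = inflate (zeroExtend A') (t' / n' * γ') := by
    rw [hγA, hγA', ← inflate_inflate, hAA', inflate_inflate]
  have hB_γ : inflate (zeroExtend B) (t / p * γ) = inflate (zeroExtend B') (t' / p' * γ') := by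
    rw [hγB, hγB', ← inflate_inflate, hBB', inflate_inflate]
  refine mequiv_iff.2 ⟨γ, γ', by positivity, by positivity, ?_, ?_, ?_⟩
  · rw [mul_assoc, mul_assoc, hγA, hγA']
    linear_combination (t * t' * (p * β)) * hmα
  · rw [mul_assoc, mul_assoc, hγB, hγB']
    linear_combination (t * t' * (n * α)) * hqβ
  · rw [zeroExtend_sstp hn hp, zeroExtend_sstp hn' hp', ← mulUpTo_inflate, ← mulUpTo_inflate,
      inflate_inflate, inflate_inflate, inflate_inflate, inflate_inflate, hA_γ, hB_γ,
      show t * γ = t' * γ' by ring]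

/-- the second semi-tensor product is well defined on matrix
equivalence classes: `A ≈ A'` and `B ≈ B'` imply `A ∘ B ≈ A' ∘ B'`. -/
theorem sstp_well_defined (m n p q m' n' p' q' : ℕ)
    (hm : 0 < m) (hn : 0 < n) (hp : 0 < p) (hq : 0 < q)
    (hm' : 0 < m') (hn' : 0 < n') (hp' : 0 < p') (hq' : 0 < q')
    (A : Matrix (Fin m) (Fin n) ℝ) (B : Matrix (Fin p) (Fin q) ℝ)
    (A' : Matrix (Fin m') (Fin n') ℝ) (B' : Matrix (Fin p') (Fin q') ℝ)
    (hA : mequiv ⟨m, n, A⟩ ⟨m', n', A'⟩) (hB : mequiv ⟨p, q, B⟩ ⟨p', q', B'⟩) :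
    mequiv ⟨m * (Nat.lcm n p / n), q * (Nat.lcm n p / p), sstp A B⟩
           ⟨m' * (Nat.lcm n' p' / n'), q' * (Nat.lcm n' p' / p'), sstp A' B'⟩ :=
  sstp_well_defined_general m n p q m' n' p' q' hn hp hn' hp' A B A' B' hA hB
end
end
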